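/- There is a constant c = c(k,d,β) such that for any f, g ∈ 𝓕 and any x ∈ [0,1]^k, ∠(f⃗(x), g⃗(x)) ≤ c · max_{s=1,…,k} ‖∂_s f(x) − ∂_s g(x)‖_∞. -/

import Mathlib

open MeasureTheory Filter Set
open scoped RealInnerProductSpace

noncomputable section

abbrev Euc (n : ℕ) := EuclideanSpace ℝ (Fin n)

/-- The sup-norm `‖x‖_∞` of a vector. -/
def supNorm {n : ℕ} (x : Euc n) : ℝ := ⨆ i, |x i|

/-- The unit cube `[0,1]^n`. -/
def unitCube (n : ℕ) : Set (Euc n) := {x | ∀ i, x i ∈ Set.Icc (0:ℝ) 1}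

/-- The uniform probability measure on `[0,1]^n`. -/
def cubeUniform (n : ℕ) : Measure (Euc n) := volume.restrict (unitCube n)

/-- The angle between two linear subspaces of `ℝ^d`:
`max_{0 ≠ u ∈ H} min_{0 ≠ v ∈ K} arccos (⟨u,v⟩ / (‖u‖‖v‖))`. -/
def subAngle {d : ℕ} (H K : Submodule ℝ (Euc d)) : ℝ :=
  ⨆ u : {u : Euc d // u ∈ H ∧ u ≠ 0},
    ⨅ v : {v : Euc d // v ∈ K ∧ v ≠ 0},
      Real.arccos (⟪u.1, v.1⟫ / (‖u.1‖ * ‖v.1‖))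

/-- The Grassmannian `G(k,d)` of `k`-dimensional linear subspaces of `ℝ^d`. -/
def Grass (k d : ℕ) := {H : Submodule ℝ (Euc d) // Module.finrank ℝ H = k}

/-- The ball `B(H,ε)` in the Grassmannian, for the angle metric. -/
def GrassBall {k d : ℕ} (H : Grass k d) (ε : ℝ) : Set (Grass k d) :=
  {K | subAngle H.1 K.1 ≤ ε}

instance {k d : ℕ} : MeasurableSpace (Grass k d) :=
  MeasurableSpace.generateFrom {S | ∃ H ε, S = GrassBall H ε}

/-- Action of an orthogonal transformation on the Grassmannian. -/
def rotGrass {k d : ℕ} (Q : Euc d ≃ₗᵢ[ℝ] Euc d) (H : Grass k d) : Grass k d :=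
  ⟨H.1.map (Q.toLinearEquiv : Euc d →ₗ[ℝ] Euc d),
    (LinearEquiv.finrank_map_eq _ _).trans H.2⟩

/-- A measure on the Grassmannian invariant under the orthogonal group `O(d)`. -/
def IsOrthInvariant {k d : ℕ} (lam : Measure (Grass k d)) : Prop :=
  ∀ Q : Euc d ≃ₗᵢ[ℝ] Euc d, ∀ S : Set (Grass k d), MeasurableSet S →
    lam (rotGrass Q ⁻¹' S) = lam S

/-- Partial derivative `∂_s f`. -/
def pd {k n : ℕ} (s : Fin k) (f : Euc k → Euc n) : Euc k → Euc n :=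
  fun x => fderiv ℝ f x (EuclideanSpace.single s 1)

/-- Iterated partial derivatives along a list of directions. -/
def pdIter {k n : ℕ} (l : List (Fin k)) (f : Euc k → Euc n) : Euc k → Euc n :=
  l.foldr pd f

/-- The list of directions associated to a multi-index. -/
def listOf {k : ℕ} (s : Fin k → ℕ) : List (Fin k) :=
  (List.finRange k).foldr (fun i l => List.replicate (s i) i ++ l) []

/-- Partial derivative `f^{(𝐬)}` of multi-order `𝐬`. -/
def mderiv {k n : ℕ} (s : Fin k → ℕ) (f : Euc k → Euc n) : Euc k → Euc n :=
  pdIter (listOf s) f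

/-- `r = max {m ∈ ℕ : m < α}`. -/
def rr (α : ℝ) : ℕ := sSup {m : ℕ | (m : ℝ) < α}

/-- The Hölder class `H^{k,n}(α,β)`. -/
def Holder (k n : ℕ) (α β : ℝ) : Set (Euc k → Euc n) :=
  {f | Set.MapsTo f (unitCube k) (unitCube n) ∧
    (∀ l : List (Fin k), l.length < rr α → Differentiable ℝ (pdIter l f)) ∧
    (∀ s : Fin k → ℕ, (∑ i, s i) ≤ rr α → ∀ x ∈ unitCube k, supNorm (mderiv s f x) ≤ β) ∧
    (∀ s : Fin k → ℕ, (∑ i, s i) = rr α → ∀ x ∈ unitCube k, ∀ y ∈ unitCube k,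
      supNorm (mderiv s f x - mderiv s f y) ≤ β * supNorm (x - y) ^ (α - rr α))}

/-- The tangent space `f⃗(x) = span {∂_s f(x) : s}`. -/
def tangent {k d : ℕ} (f : Euc k → Euc d) (x : Euc k) : Submodule ℝ (Euc d) :=
  Submodule.span ℝ (Set.range fun s => pd s f x)

/-- The class `𝓕` of the paper. -/
def ClassF (k d : ℕ) (β : ℝ) : Set (Euc k → Euc d) :=
  {f | Set.MapsTo f (unitCube k) (unitCube d) ∧
    Set.InjOn f (unitCube k) ∧
    Differentiable ℝ f ∧ (∀ s, Differentiable ℝ (pd s f)) ∧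
    (∀ s, ∀ x ∈ unitCube k, 1/β ≤ supNorm (pd s f x) ∧ supNorm (pd s f x) ≤ β) ∧
    (∀ s t, ∀ x ∈ unitCube k, supNorm (pd t (pd s f) x) ≤ β) ∧
    (1 < k → ∀ s, ∀ x ∈ unitCube k,
      1/(2*β*((d:ℝ) - k)) ≤ subAngle (Submodule.span ℝ {pd s f x})
        (Submodule.span ℝ ((fun t => pd t f x) '' {t | t ≠ s})))}

/-- `f` interpolates `(z, w) ∈ [0,1]^d × G(k,d)`. -/
def InterpF {k d : ℕ} (f : Euc k → Euc d) (p : Euc d × Grass k d) : Prop :=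
  ∃ x ∈ unitCube k, f x = p.1 ∧ tangent f x = p.2.1

/-- `N_n^→(𝓕) = max_{f ∈ 𝓕} #{i : f interpolates (Z_i,W_i)}`. -/
def NFmax (k d : ℕ) (β : ℝ) {n : ℕ} (ω : Fin n → Euc d × Grass k d) : ℕ :=
  ⨆ f : ClassF k d β, Nat.card {i : Fin n // InterpF f.1 (ω i)}

/-- The set `𝐒` of multi-indices of total order at most `r₀`. -/
def SIdx (k r0 : ℕ) := {s : Fin k → Fin (r0+1) // (∑ i, (s i : ℕ)) ≤ r0}

instance (k r0 : ℕ) : Fintype (SIdx k r0) := by unfold SIdx; infer_instance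

/-- The multi-index in `ℕ^k` associated to an element of `𝐒`. -/
def toMulti {k r0 : ℕ} (s : SIdx k r0) : Fin k → ℕ := fun i => (s.1 i : ℕ)

/-- The uniform probability measure on `[-β,β]^n`. -/
def boxUniform (n : ℕ) (β : ℝ) : Measure (Euc n) :=
  (ENNReal.ofReal ((2*β)^n))⁻¹ • volume.restrict {y : Euc n | ∀ j, y j ∈ Set.Icc (-β) β}

open Classical in
/-- The distribution of one observation `(X, Y^𝐒)` under the null hypothesis:
uniform on `[0,1]^k × [0,1]^{d-k} × [-β,β]^{(d-k)(|𝐒|-1)}`. -/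
def obsMeasure (k d r0 : ℕ) (β : ℝ) : Measure (Euc k × (SIdx k r0 → Euc (d-k))) :=
  (cubeUniform k).prod (Measure.pi fun s : SIdx k r0 =>
    if (∀ i, s.1 i = 0) then cubeUniform (d-k) else boxUniform (d-k) β)

/-- `f` interpolates `(x, y^𝐒)`. -/
def InterpH {k d r0 : ℕ} (f : Euc k → Euc (d-k))
    (p : Euc k × (SIdx k r0 → Euc (d-k))) : Prop :=
  ∀ s : SIdx k r0, mderiv (toMulti s) f p.1 = p.2 s

/-- `N_n^{(r₀)}(𝓗) = max_{f ∈ 𝓗} #{i : f interpolates (X_i, Y_i^𝐒)}`. -/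
def NHmax (k d r0 : ℕ) (α β : ℝ) {n : ℕ}
    (ω : Fin n → Euc k × (SIdx k r0 → Euc (d-k))) : ℕ :=
  ⨆ f : Holder k (d-k) α β, Nat.card {i : Fin n // InterpH f.1 (ω i)}

/-- `w = Σ_{s=0}^{r₀} (1 - s/α) C(s+k-1, k-1)`. -/
def wconst (k r0 : ℕ) (α : ℝ) : ℝ :=
  ∑ s ∈ Finset.range (r0+1), (1 - s/α) * (Nat.choose (s+k-1) (k-1))

/-- `ρ(r₀) = k / (k + α (d-k) w)`. -/
def rho (k d r0 : ℕ) (α : ℝ) : ℝ := k / (k + α*((d:ℝ)-k)*wconst k r0 α)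

/-- Sup-norm of a function over the unit cube. -/
def funSup {k n : ℕ} (f : Euc k → Euc n) : ℝ := ⨆ x : unitCube k, supNorm (f x.1)

/-- The discrepancy `Φ` on the Hölder class. -/
def Phi {k n : ℕ} (r0 : ℕ) (α : ℝ) (f g : Euc k → Euc n) : ℝ :=
  ⨆ s : SIdx k r0, funSup (fun x => mderiv (toMulti s) f x - mderiv (toMulti s) g x) ^
    (α / (α - ∑ i, (toMulti s i : ℝ)))

/-- The discrepancy `Φ` on the values `y^𝐒`. -/
def PhiPt {k n r0 : ℕ} (α : ℝ) (y1 y2 : SIdx k r0 → Euc n) : ℝ :=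
  ⨆ s : SIdx k r0, supNorm (y1 s - y2 s) ^ (α / (α - ∑ i, (toMulti s i : ℝ)))

/-- Concatenation `ℝ^k × ℝ^{d-k} → ℝ^d`, identifying `ℝ^d` with `ℝ^k × ℝ^{d-k}`. -/
def pairFun {k d : ℕ} (h : k ≤ d) (x : Euc k) (y : Euc (d-k)) : Euc d :=
  WithLp.toLp 2 (fun j => Fin.append x y (Fin.cast (Nat.add_sub_cancel' h).symm j))

/-- `ε = ε(n)`, the solution of `ε^{-k/α} = ε^{(d-k)w} n`. -/
def epsN (k d r0 : ℕ) (α : ℝ) (n : ℕ) : ℝ :=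
  (n:ℝ) ^ (-(α / (k + α*((d:ℝ)-k)*wconst k r0 α)))

/-- The cell `I_m` of sidelength `ε'` indexed by `m`. -/
def cellI {k : ℕ} (ε' : ℝ) (m : Fin k → ℕ) : Set (Euc k) :=
  {x | ∀ i, x i ∈ Set.Ico ((m i : ℝ) * ε') (((m i : ℝ) + 1) * ε')}

open Classical in
/-- The box `R_m = I_m × [ε/2,ε]^{d-k} × Π_{𝐬 ≠ 0} [0,ε_𝐬]^{d-k}`. -/
def Rset (k d r0 : ℕ) (α : ℝ) (ε ε' : ℝ) (m : Fin k → ℕ) :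
    Set (Euc k × (SIdx k r0 → Euc (d-k))) :=
  {p | p.1 ∈ cellI ε' m ∧ ∀ s : SIdx k r0, ∀ j,
    if (∀ i, s.1 i = 0) then p.2 s j ∈ Set.Icc (ε/2) ε
    else p.2 s j ∈ Set.Icc 0 (ε ^ (1 - (∑ i, (toMulti s i : ℝ))/α))}


/-!
Write `u ∈ f⃗(x)` as `∑ₛ aₛ ∂ₛf(x)`. Condition (iii) says that each `∂ₛf(x)` lies at distance at
least `sin θ₀ ‖∂ₛf(x)‖` from the span of the other partial derivatives, `θ₀ = 1/(2β(d-k))`;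
together with `‖∂ₛf(x)‖ ≥ 1/β` this gives `|aₛ| ≤ β‖u‖ / sin θ₀`. Hence `u' = ∑ₛ aₛ ∂ₛg(x) ∈ g⃗(x)`
satisfies `‖u - u'‖ ≤ C δ ‖u‖`, where `δ = maxₛ ‖∂ₛf(x) - ∂ₛg(x)‖_∞`, and by Jordan's inequality
the angle between `u` and `u'` is at most `π ‖u - u'‖ / ‖u‖`.
-/

open Real InnerProductGeometry

section Angle

variable {V : Type*} [NormedAddCommGroup V] [InnerProductSpace ℝ V]

theorem norm_mul_sin_angle_le_norm_sub (x y : V) : ‖x‖ * sin (angle x y) ≤ ‖x - y‖ := by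
  have hsq : (‖x‖ * sin (angle x y)) ^ 2 ≤ ‖x - y‖ ^ 2 := by
    rw [norm_sub_sq_real, ← cos_angle_mul_norm_mul_norm]
    nlinarith [sq_nonneg (‖y‖ - ‖x‖ * cos (angle x y)), sin_sq_add_cos_sq (angle x y)]
  exact (abs_le_of_sq_le_sq' hsq (norm_nonneg _)).2

theorem norm_le_norm_sub_of_pi_div_two_le_angle {x y : V} (h : π / 2 ≤ angle x y) :
    ‖x‖ ≤ ‖x - y‖ := by
  have hcos : cos (angle x y) ≤ 0 :=
    cos_nonpos_of_pi_div_two_le_of_le h (by linarith [angle_le_pi x y, pi_pos])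
  have hinner : ⟪x, y⟫ ≤ 0 := by
    rw [← cos_angle_mul_norm_mul_norm]
    exact mul_nonpos_of_nonpos_of_nonneg hcos (by positivity)
  refine (abs_le_of_sq_le_sq' ?_ (norm_nonneg _)).2
  rw [norm_sub_sq_real]
  nlinarith [sq_nonneg ‖y‖]

theorem norm_mul_sin_le_norm_sub_of_le_angle {θ : ℝ} (hθ₀ : 0 ≤ θ) (hθ : θ ≤ π / 2) {x y : V}
    (h : θ ≤ angle x y) : ‖x‖ * sin θ ≤ ‖x - y‖ := by
  rcases le_total (angle x y) (π / 2) with hle | hge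
  · calc ‖x‖ * sin θ ≤ ‖x‖ * sin (angle x y) :=
          mul_le_mul_of_nonneg_left (sin_le_sin_of_le_of_le_pi_div_two (by linarith) hle h)
            (norm_nonneg x)
      _ ≤ ‖x - y‖ := norm_mul_sin_angle_le_norm_sub x y
  · calc ‖x‖ * sin θ ≤ ‖x‖ := mul_le_of_le_one_right (norm_nonneg x) (sin_le_one θ)
      _ ≤ ‖x - y‖ := norm_le_norm_sub_of_pi_div_two_le_angle hge

theorem angle_le_pi_mul_norm_sub_div_norm {x : V} (hx : x ≠ 0) (y : V) :
    angle x y ≤ π * (‖x - y‖ / ‖x‖) := by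
  rw [mul_div_assoc', le_div_iff₀ (norm_pos_iff.2 hx)]
  rcases le_total (angle x y) (π / 2) with hle | hge
  · -- Jordan's inequality `2θ/π ≤ sin θ` on `[0, π/2]`
    have hJordan := mul_le_sin (angle_nonneg x y) hle
    rw [div_mul_eq_mul_div, div_le_iff₀ pi_pos] at hJordan
    nlinarith [mul_le_mul_of_nonneg_right hJordan (norm_nonneg x),
      mul_le_mul_of_nonneg_left (norm_mul_sin_angle_le_norm_sub x y) pi_pos.le,
      mul_nonneg (angle_nonneg x y) (norm_nonneg x)]
  · calc angle x y * ‖x‖ ≤ π * ‖x‖ := by gcongr; exact angle_le_pi x y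
      _ ≤ π * ‖x - y‖ := by gcongr; exact norm_le_norm_sub_of_pi_div_two_le_angle hge

theorem mul_abs_mul_norm_le_norm_sum {ι : Type*} [Fintype ι] [DecidableEq ι] {v : ι → V}
    {σ : ℝ} (hv : ∀ s, ∀ z ∈ Submodule.span ℝ (v '' {t | t ≠ s}), σ * ‖v s‖ ≤ ‖v s - z‖)
    (a : ι → ℝ) (s : ι) : σ * (|a s| * ‖v s‖) ≤ ‖∑ t, a t • v t‖ := by
  rcases eq_or_ne (a s) 0 with has | has
  · simp [has]
  set y := (-(a s)⁻¹) • ∑ t ∈ Finset.univ.erase s, a t • v t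
  have hy : y ∈ Submodule.span ℝ (v '' {t | t ≠ s}) :=
    Submodule.smul_mem _ _ <| Submodule.sum_mem _ fun t ht =>
      Submodule.smul_mem _ _ (Submodule.subset_span ⟨t, Finset.ne_of_mem_erase ht, rfl⟩)
  have hsum : a s • (v s - y) = ∑ t, a t • v t := by
    rw [smul_sub, smul_smul, mul_neg, mul_inv_cancel₀ has, neg_smul, one_smul, sub_neg_eq_add]
    exact Finset.add_sum_erase _ (fun t => a t • v t) (Finset.mem_univ s)
  rw [← hsum, norm_smul, Real.norm_eq_abs, mul_left_comm]
  exact mul_le_mul_of_nonneg_left (hv s y hy) (abs_nonneg _)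

end Angle

section SubspaceAngle

variable {d : ℕ}

theorem le_angle_of_le_subAngle_span_singleton {θ : ℝ} {w z : Euc d} {K : Submodule ℝ (Euc d)}
    (h : θ ≤ subAngle (Submodule.span ℝ {w}) K) (hz : z ∈ K) (hz0 : z ≠ 0) : θ ≤ angle w z := by
  refine h.trans (Real.iSup_le (fun ⟨u, hu, hu0⟩ => ?_) (angle_nonneg w z))
  obtain ⟨t, rfl⟩ := Submodule.mem_span_singleton.1 hu
  have ht : t ≠ 0 := by rintro rfl; simp at hu0
  have hbdd : BddBelow (Set.range fun v : {v : Euc d // v ∈ K ∧ v ≠ 0} => angle (t • w) v.1) :=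
    ⟨0, by rintro _ ⟨v, rfl⟩; exact angle_nonneg _ _⟩
  calc _ ≤ angle (t • w) (t • z) := ciInf_le hbdd ⟨t • z, K.smul_mem t hz, smul_ne_zero ht hz0⟩
    _ = angle w z := angle_smul_smul ht w z

theorem norm_mul_sin_le_norm_sub_of_le_subAngle {θ : ℝ} (hθ₀ : 0 ≤ θ) (hθ : θ ≤ π / 2)
    {w z : Euc d} {K : Submodule ℝ (Euc d)} (h : θ ≤ subAngle (Submodule.span ℝ {w}) K)
    (hz : z ∈ K) : ‖w‖ * sin θ ≤ ‖w - z‖ := by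
  refine norm_mul_sin_le_norm_sub_of_le_angle hθ₀ hθ ?_
  rcases eq_or_ne z 0 with rfl | hz0
  · rwa [angle_zero_right]
  · exact le_angle_of_le_subAngle_span_singleton h hz hz0

theorem subAngle_le_pi_mul_of_forall_exists_norm_sub_le {H K : Submodule ℝ (Euc d)} {C : ℝ}
    (hC : 0 ≤ C) (h : ∀ u ∈ H, ∃ v ∈ K, ‖u - v‖ ≤ C * ‖u‖) : subAngle H K ≤ π * C := by
  refine Real.iSup_le (fun ⟨u, hu, hu0⟩ => ?_) (by positivity)
  have hu' : 0 < ‖u‖ := norm_pos_iff.2 hu0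
  obtain ⟨v, hv, huv⟩ := h u hu
  have hbdd : BddBelow (Set.range fun v : {v : Euc d // v ∈ K ∧ v ≠ 0} => angle u v.1) :=
    ⟨0, by rintro _ ⟨v, rfl⟩; exact angle_nonneg _ _⟩
  rcases eq_or_ne v 0 with rfl | hv0
  · -- here `‖u‖ ≤ C‖u‖`, so `1 ≤ C` and the trivial bound `angle ≤ π` suffices
    have hC1 : 1 ≤ C := le_of_mul_le_mul_right (by simpa using huv) hu'
    rcases isEmpty_or_nonempty {v : Euc d // v ∈ K ∧ v ≠ 0} with hK | hK
    · rw [Real.iInf_of_isEmpty]; positivity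
    · obtain ⟨w⟩ := hK
      calc _ ≤ angle u w.1 := ciInf_le hbdd w
        _ ≤ π * C := by nlinarith [angle_le_pi u w.1, pi_pos]
  · calc _ ≤ angle u v := ciInf_le hbdd ⟨v, hv, hv0⟩
      _ ≤ π * (‖u - v‖ / ‖u‖) := angle_le_pi_mul_norm_sub_div_norm hu0 v
      _ ≤ π * C := by gcongr; rwa [div_le_iff₀ hu']

end SubspaceAngle

section SupNorm

variable {n : ℕ}

theorem supNorm_nonneg (x : Euc n) : 0 ≤ supNorm x :=
  Real.iSup_nonneg fun _ => abs_nonneg _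

theorem abs_apply_le_supNorm (x : Euc n) (i : Fin n) : |x i| ≤ supNorm x :=
  le_ciSup (f := fun j => |x j|) (Finite.bddAbove_range _) i

theorem supNorm_le_norm (x : Euc n) : supNorm x ≤ ‖x‖ :=
  Real.iSup_le (fun i => (Real.norm_eq_abs _).symm.trans_le (PiLp.norm_apply_le x i))
    (norm_nonneg x)

theorem norm_le_sqrt_mul_supNorm (x : Euc n) : ‖x‖ ≤ √n * supNorm x := by
  refine (abs_le_of_sq_le_sq' ?_ (mul_nonneg (sqrt_nonneg _) (supNorm_nonneg x))).2
  rw [EuclideanSpace.norm_sq_eq, mul_pow, Real.sq_sqrt n.cast_nonneg]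
  calc ∑ i, ‖x i‖ ^ 2 ≤ ∑ _i : Fin n, supNorm x ^ 2 :=
        Finset.sum_le_sum fun i _ => pow_le_pow_left₀ (norm_nonneg _)
          ((Real.norm_eq_abs _).trans_le (abs_apply_le_supNorm x i)) 2
    _ = n * supNorm x ^ 2 := by simp

end SupNorm

/-- The angle bound `θ₀` of condition (iii) in `ClassF`. -/
def separationAngle (k d : ℕ) (β : ℝ) : ℝ := 1 / (2 * β * ((d : ℝ) - k))

section SeparationAngle

variable {k d : ℕ} {β : ℝ}

theorem separationAngle_mem_Ioc (hβ : 1 ≤ β) (hkd : k < d) :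
    separationAngle k d β ∈ Set.Ioc 0 (1 / 2) := by
  have hkd' : (k : ℝ) + 1 ≤ d := by exact_mod_cast hkd
  have hden : 2 ≤ 2 * β * ((d : ℝ) - k) := by nlinarith
  exact ⟨one_div_pos.2 (by linarith), one_div_le_one_div_of_le two_pos hden⟩

theorem separationAngle_pos (hβ : 1 ≤ β) (hkd : k < d) : 0 < separationAngle k d β :=
  (separationAngle_mem_Ioc hβ hkd).1

theorem separationAngle_le_pi_div_two (hβ : 1 ≤ β) (hkd : k < d) :
    separationAngle k d β ≤ π / 2 := by
  linarith [(separationAngle_mem_Ioc hβ hkd).2, pi_gt_three]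

theorem sin_separationAngle_pos (hβ : 1 ≤ β) (hkd : k < d) : 0 < sin (separationAngle k d β) :=
  sin_pos_of_pos_of_lt_pi (separationAngle_pos hβ hkd)
    (by linarith [separationAngle_le_pi_div_two hβ hkd, pi_pos])

end SeparationAngle

namespace ClassF

variable {k d : ℕ} {β : ℝ} {f : Euc k → Euc d} {x : Euc k}

theorem one_div_le_norm_pd (hf : f ∈ ClassF k d β) (hx : x ∈ unitCube k) (s : Fin k) :
    1 / β ≤ ‖pd s f x‖ :=
  (hf.2.2.2.2.1 s x hx).1.trans (supNorm_le_norm _)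

theorem sin_mul_norm_pd_le_norm_sub (hf : f ∈ ClassF k d β) (hβ : 1 ≤ β) (hkd : k < d)
    (hx : x ∈ unitCube k) (s : Fin k) {z : Euc d}
    (hz : z ∈ Submodule.span ℝ ((fun t => pd t f x) '' {t | t ≠ s})) :
    sin (separationAngle k d β) * ‖pd s f x‖ ≤ ‖pd s f x - z‖ := by
  rcases lt_or_ge 1 k with hk | hk
  · rw [mul_comm]
    exact norm_mul_sin_le_norm_sub_of_le_subAngle (separationAngle_pos hβ hkd).le
      (separationAngle_le_pi_div_two hβ hkd) (hf.2.2.2.2.2.2 hk s x hx) hz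
  · have hs : {t : Fin k | t ≠ s} = ∅ := by
      have := Fin.subsingleton_iff_le_one.2 hk
      simp [Subsingleton.elim _ s]
    rw [hs, Set.image_empty, Submodule.span_empty, Submodule.mem_bot] at hz
    rw [hz, sub_zero]
    exact mul_le_of_le_one_left (norm_nonneg _) (sin_le_one _)

theorem abs_le_mul_norm_sum_smul_pd (hf : f ∈ ClassF k d β) (hβ : 1 ≤ β) (hkd : k < d)
    (hx : x ∈ unitCube k) (a : Fin k → ℝ) (s : Fin k) :
    |a s| ≤ β / sin (separationAngle k d β) * ‖∑ t, a t • pd t f x‖ := by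
  have hsin := sin_separationAngle_pos hβ hkd
  have hcoeff := mul_abs_mul_norm_le_norm_sum (v := fun t => pd t f x)
    (fun s _ hz => sin_mul_norm_pd_le_norm_sub hf hβ hkd hx s hz) a s
  have hnorm : 1 ≤ β * ‖pd s f x‖ := by
    rw [← div_le_iff₀' (by linarith)]; exact one_div_le_norm_pd hf hx s
  rw [div_mul_eq_mul_div, le_div_iff₀ hsin]
  calc |a s| * sin (separationAngle k d β)
      ≤ |a s| * sin (separationAngle k d β) * (β * ‖pd s f x‖) :=
        le_mul_of_one_le_right (mul_nonneg (abs_nonneg _) hsin.le) hnorm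
    _ = β * (sin (separationAngle k d β) * (|a s| * ‖pd s f x‖)) := by ring
    _ ≤ β * ‖∑ t, a t • pd t f x‖ := mul_le_mul_of_nonneg_left hcoeff (by linarith)

theorem exists_mem_tangent_norm_sub_le (hf : f ∈ ClassF k d β) (hβ : 1 ≤ β) (hkd : k < d)
    (hx : x ∈ unitCube k) (g : Euc k → Euc d) {u : Euc d} (hu : u ∈ tangent f x) :
    ∃ u' ∈ tangent g x, ‖u - u'‖ ≤
      k * β * √d / sin (separationAngle k d β) *
        (⨆ s : Fin k, supNorm (pd s f x - pd s g x)) * ‖u‖ := by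
  set δ := ⨆ s : Fin k, supNorm (pd s f x - pd s g x)
  have hpd : ∀ t, ‖pd t f x - pd t g x‖ ≤ √d * δ := fun t =>
    (norm_le_sqrt_mul_supNorm _).trans <| mul_le_mul_of_nonneg_left
      (le_ciSup (f := fun s => supNorm (pd s f x - pd s g x)) (Finite.bddAbove_range _) t)
      (sqrt_nonneg _)
  obtain ⟨a, rfl⟩ := (Submodule.mem_span_range_iff_exists_fun ℝ).1 hu
  refine ⟨∑ t, a t • pd t g x,
    Submodule.sum_mem _ fun t _ => Submodule.smul_mem _ _ (Submodule.subset_span ⟨t, rfl⟩), ?_⟩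
  rw [← Finset.sum_sub_distrib]
  calc ‖∑ t, (a t • pd t f x - a t • pd t g x)‖
      ≤ ∑ t, |a t| * ‖pd t f x - pd t g x‖ := by
        refine (norm_sum_le _ _).trans (Finset.sum_le_sum fun t _ => ?_)
        rw [← smul_sub, norm_smul, Real.norm_eq_abs]
    _ ≤ ∑ _t : Fin k, β / sin (separationAngle k d β) * ‖∑ t, a t • pd t f x‖ * (√d * δ) :=
        Finset.sum_le_sum fun t _ => mul_le_mul (abs_le_mul_norm_sum_smul_pd hf hβ hkd hx a t)
          (hpd t) (norm_nonneg _) (mul_nonneg (div_nonneg (by linarith)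
            (sin_separationAngle_pos hβ hkd).le) (norm_nonneg _))
    _ = _ := by simp only [Finset.sum_const, Finset.card_univ, Fintype.card_fin, nsmul_eq_mul]; ring

end ClassF

open ClassF

theorem phi_psi_general (k d : ℕ) (hkd : k < d) (β : ℝ) (hβ : 1 ≤ β) :
    ∃ c : ℝ, 0 < c ∧ ∀ f ∈ ClassF k d β, ∀ g ∈ ClassF k d β, ∀ x ∈ unitCube k,
      subAngle (tangent f x) (tangent g x) ≤ c * ⨆ s : Fin k, supNorm (pd s f x - pd s g x) := by
  set C := k * β * √d / sin (separationAngle k d β)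
  have hC : 0 ≤ C := div_nonneg (by positivity) (sin_separationAngle_pos hβ hkd).le
  refine ⟨π * C + 1, by positivity, fun f hf g _ x hx => ?_⟩
  set δ := ⨆ s : Fin k, supNorm (pd s f x - pd s g x)
  have hδ : 0 ≤ δ := Real.iSup_nonneg fun _ => supNorm_nonneg _
  calc subAngle (tangent f x) (tangent g x) ≤ π * (C * δ) :=
        subAngle_le_pi_mul_of_forall_exists_norm_sub_le (mul_nonneg hC hδ) fun u hu =>
          exists_mem_tangent_norm_sub_le hf hβ hkd hx g hu
    _ ≤ (π * C + 1) * δ := by nlinarith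

/-- **Lemma 5.** There is `c = c(k,d,β)` such that for any `f, g ∈ 𝓕` and `x ∈ [0,1]^k`,
`∠(f⃗(x), g⃗(x)) ≤ c max_s ‖∂_s f(x) - ∂_s g(x)‖_∞`. -/
theorem phi_psi (k d : ℕ) (hk : 1 ≤ k) (hkd : k < d) (β : ℝ) (hβ : 1 ≤ β) :
    ∃ c : ℝ, 0 < c ∧ ∀ f ∈ ClassF k d β, ∀ g ∈ ClassF k d β, ∀ x ∈ unitCube k,
      subAngle (tangent f x) (tangent g x) ≤ c * ⨆ s : Fin k, supNorm (pd s f x - pd s g x) :=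
  phi_psi_general k d hkd β hβ

end
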